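/- If (x1,x2) ∈ [−π,π]² is a critical point of β (∇β(x1,x2) = 0) and β(x1,x2) ≠ 0, then β(x1,x2) = 1 or β(x1,x2) = 9. -/

import Mathlib

open Real

noncomputable def hexβ (x1 x2 : ℝ) : ℝ :=
  3 + 2 * (Real.cos x1 + Real.cos x2 + Real.cos (x1 - x2))

/-!
The two partial derivatives vanish iff `sin x₁ = -sin (x₁ - x₂) = -sin x₂`, which by the
subtraction formula leaves `sin x₂ * (1 + cos x₁ + cos x₂) = 0`. If `sin x₂ = 0`, both cosines
are `±1` and `β ∈ {1, 9}`. Otherwise `cos x₁ + cos x₂ = -1` and `cos² x₁ = cos² x₂` force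
`cos x₁ = cos x₂ = -1/2`, where `β = 0`.
-/

theorem hexβ_eq_cos_mul_add_sin_mul (x1 x2 : ℝ) :
    hexβ x1 x2 = 3 + 2 * (cos x1 + cos x2 + (cos x1 * cos x2 + sin x1 * sin x2)) := by
  rw [hexβ, cos_sub]

theorem hasDerivAt_hexβ_left (x1 x2 : ℝ) :
    HasDerivAt (fun t => hexβ t x2) (-2 * (sin x1 + sin (x1 - x2))) x1 := by
  have hsub : HasDerivAt (fun t => cos (t - x2)) (-sin (x1 - x2)) x1 := by
    simpa using ((hasDerivAt_id' x1).sub_const x2).cos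
  exact ((((hasDerivAt_cos x1).add_const (cos x2)).add hsub).const_mul 2).const_add 3
    |>.congr_deriv (by ring)

theorem hasDerivAt_hexβ_right (x1 x2 : ℝ) :
    HasDerivAt (fun t => hexβ x1 t) (-2 * (sin x2 - sin (x1 - x2))) x2 := by
  have hsub : HasDerivAt (fun t => cos (x1 - t)) (sin (x1 - x2)) x2 := by
    simpa using ((hasDerivAt_id' x2).const_sub x1).cos
  exact ((((hasDerivAt_cos x2).const_add (cos x1)).add hsub).const_mul 2).const_add 3
    |>.congr_deriv (by ring)

theorem sin_eq_neg_sin_and_sin_eq_zero_or_cos_add_cos_eq_neg_one {x1 x2 : ℝ}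
    (e1 : sin x1 + sin (x1 - x2) = 0) (e2 : sin x2 = sin (x1 - x2)) :
    sin x1 = -sin x2 ∧ (sin x2 = 0 ∨ cos x1 + cos x2 = -1) := by
  have hs : sin x1 = -sin x2 := by linarith
  have hprod : sin x2 * (cos x1 + cos x2 + 1) = 0 := by
    rw [sin_sub, hs] at e2
    linear_combination e2
  exact ⟨hs, (mul_eq_zero.1 hprod).imp_right eq_neg_of_add_eq_zero_left⟩

theorem hexβ_eq_one_or_nine_of_sin_eq_zero {x1 x2 : ℝ} (h1 : sin x1 = 0) (h2 : sin x2 = 0) :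
    hexβ x1 x2 = 1 ∨ hexβ x1 x2 = 9 := by
  rw [hexβ_eq_cos_mul_add_sin_mul, h1, h2]
  rcases sin_eq_zero_iff_cos_eq.1 h1 with c1 | c1 <;>
    rcases sin_eq_zero_iff_cos_eq.1 h2 with c2 | c2 <;> rw [c1, c2] <;> norm_num

theorem hexβ_eq_zero_of_cos_add_cos_eq_neg_one {x1 x2 : ℝ} (hs : sin x1 = -sin x2)
    (hc : cos x1 + cos x2 = -1) : hexβ x1 x2 = 0 := by
  have hsq : cos x1 ^ 2 = cos x2 ^ 2 := by
    linear_combination (sin x2 - sin x1) * hs + sin_sq_add_cos_sq x1 - sin_sq_add_cos_sq x2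
  have hc1 : cos x1 = -1 / 2 := by
    rcases sq_eq_sq_iff_eq_or_eq_neg.1 hsq with h | h <;> linarith
  have hc2 : cos x2 = -1 / 2 := by linarith
  have hs2 : sin x2 ^ 2 = 3 / 4 := by rw [sin_sq, hc2]; norm_num
  rw [hexβ_eq_cos_mul_add_sin_mul, hs, hc1, hc2]
  linear_combination (-2) * hs2

theorem hexβ_critical_values_general (x1 x2 : ℝ)
    (hc1 : HasDerivAt (fun t => hexβ t x2) 0 x1)
    (hc2 : HasDerivAt (fun t => hexβ x1 t) 0 x2)
    (hβ : hexβ x1 x2 ≠ 0) :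
    hexβ x1 x2 = 1 ∨ hexβ x1 x2 = 9 := by
  have e1 : sin x1 + sin (x1 - x2) = 0 := by
    have := hc1.unique (hasDerivAt_hexβ_left x1 x2); linarith
  have e2 : sin x2 = sin (x1 - x2) := by
    have := hc2.unique (hasDerivAt_hexβ_right x1 x2); linarith
  obtain ⟨hs, hs2 | hcos⟩ := sin_eq_neg_sin_and_sin_eq_zero_or_cos_add_cos_eq_neg_one e1 e2
  · exact hexβ_eq_one_or_nine_of_sin_eq_zero (by rw [hs, hs2, neg_zero]) hs2
  · exact absurd (hexβ_eq_zero_of_cos_add_cos_eq_neg_one hs hcos) hβ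

theorem hexβ_critical_values (x1 x2 : ℝ)
    (h1 : x1 ∈ Set.Icc (-π) π) (h2 : x2 ∈ Set.Icc (-π) π)
    (hc1 : HasDerivAt (fun t => hexβ t x2) 0 x1)
    (hc2 : HasDerivAt (fun t => hexβ x1 t) 0 x2)
    (hβ : hexβ x1 x2 ≠ 0) :
    hexβ x1 x2 = 1 ∨ hexβ x1 x2 = 9 :=
  hexβ_critical_values_general x1 x2 hc1 hc2 hβ
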